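/- Let W be an algebraic Weyl curvature tensor on a Euclidean vector space V of dimension n ≥ 4. If h₁, h₂ ∈ E_W, then the commutator [h₁, h₂] = h₁h₂ − h₂h₁ belongs to g_W, i.e. W([h₁,h₂]x, y, z, u) + W(x, [h₁,h₂]y, z, u) + W(x, y, [h₁,h₂]z, u) + W(x, y, z, [h₁,h₂]u) = 0 for all x,y,z,u. -/

import Mathlib

open scoped RealInnerProductSpace
open Finset

/-- A curvature-type 4-linear tensor on `V`. -/
abbrev Tensor4 (V : Type*) [NormedAddCommGroup V] [InnerProductSpace ℝ V] : Type _ :=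
  V →ₗ[ℝ] V →ₗ[ℝ] V →ₗ[ℝ] V →ₗ[ℝ] ℝ

variable {V : Type*} [NormedAddCommGroup V] [InnerProductSpace ℝ V] [FiniteDimensional ℝ V]

/-- `W` is an algebraic Weyl curvature tensor: it has the symmetries of a curvature
tensor, satisfies the first Bianchi identity, and is totally trace-free. -/
structure IsWeylTensor (W : Tensor4 V) : Prop where
  antisym₁ : ∀ x y z u, W x y z u = - W y x z u
  antisym₂ : ∀ x y z u, W x y z u = - W x y u z
  pair_symm : ∀ x y z u, W x y z u = W z u x y
  bianchi : ∀ x y z u, W x y z u + W y z x u + W z x y u = 0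
  trace_free : ∀ (b : OrthonormalBasis (Fin (Module.finrank ℝ V)) ℝ V) (x y : V),
      ∑ i, W x (b i) y (b i) = 0

/-- The extension of `W` to endomorphisms, `W(h) = Σᵢ W(eᵢ, ·, h eᵢ, ·)`,
viewed as a bilinear form (identified with an endomorphism via the metric). -/
noncomputable def weylExt {ι : Type*} [Fintype ι]
    (W : Tensor4 V) (b : OrthonormalBasis ι ℝ V) (h : V →ₗ[ℝ] V) (v w : V) : ℝ :=
  ∑ i, W (b i) v (h (b i)) w

/-- The space `E_W`: endomorphisms `h` with `W(x,y,hz,·) + W(y,z,hx,·) + W(z,x,hy,·) = 0`. -/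
def memE (W : Tensor4 V) (h : V →ₗ[ℝ] V) : Prop :=
  ∀ x y z u, W x y (h z) u + W y z (h x) u + W z x (h y) u = 0

/-- The Lie algebra `g_W` of the symmetry group of `W`. -/
def memG (W : Tensor4 V) (h : V →ₗ[ℝ] V) : Prop :=
  ∀ x y z u, W (h x) y z u + W x (h y) z u + W x y (h z) u + W x y z (h u) = 0

/-- Skew-symmetric endomorphisms (identified with 2-forms). -/
def IsSkew (F : V →ₗ[ℝ] V) : Prop := ∀ v w, ⟪F v, w⟫ = - ⟪v, F w⟫

/-- Symmetric endomorphisms. -/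
def IsSym (F : V →ₗ[ℝ] V) : Prop := ∀ v w, ⟪F v, w⟫ = ⟪v, F w⟫

/-- The bilinear form `g(F·,·)` associated to an endomorphism `F`. -/
noncomputable def form (F : V →ₗ[ℝ] V) (v w : V) : ℝ := ⟪F v, w⟫

/-!
Polarize the defining identity of `E_W` for `h₁` along `h₂`: insert `h₂` into each of the four
arguments and sum with the signs of a derivation. The pair symmetries of `W` turn the result into
the `g_W`-defect of `h₁ h₂` plus cross terms in which `h₁` and `h₂` act on different arguments.
The reversal symmetry `W(x,y,z,u) = W(u,z,y,x)` makes the cross terms symmetric in `h₁, h₂`, so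
they cancel in the commutator, whose `g_W`-defect is therefore a combination of `E_W`-defects.
-/

section CommutatorOfE

omit [FiniteDimensional ℝ V]

-- Instance search does not find `Sub (Tensor4 V)`, so `map_sub` cannot be used for the first slot.
theorem Tensor4.map_sub_apply (W : Tensor4 V) (a b y z u : V) :
    W (a - b) y z u = W a y z u - W b y z u := by
  rw [eq_sub_iff_add_eq, ← LinearMap.add_apply, ← LinearMap.add_apply, ← LinearMap.add_apply,
    ← map_add, sub_add_cancel]

variable {W : Tensor4 V}

structure HasCurvatureSymmetries (W : Tensor4 V) : Prop where
  antisym₁ : ∀ x y z u, W x y z u = - W y x z u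
  antisym₂ : ∀ x y z u, W x y z u = - W x y u z
  pair_symm : ∀ x y z u, W x y z u = W z u x y

theorem IsWeylTensor.hasCurvatureSymmetries (hW : IsWeylTensor W) : HasCurvatureSymmetries W :=
  ⟨hW.antisym₁, hW.antisym₂, hW.pair_symm⟩

theorem HasCurvatureSymmetries.reverse (hW : HasCurvatureSymmetries W) (x y z u : V) :
    W x y z u = W u z y x := by
  rw [hW.pair_symm u, hW.antisym₁ y, hW.antisym₂ x]

variable (W)

def eDefect (h : V →ₗ[ℝ] V) (x y z u : V) : ℝ :=
  W x y (h z) u + W y z (h x) u + W z x (h y) u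

def gDefect (h : V →ₗ[ℝ] V) (x y z u : V) : ℝ :=
  W (h x) y z u + W x (h y) z u + W x y (h z) u + W x y z (h u)

def eDefectComp (h₁ h₂ : V →ₗ[ℝ] V) (x y z u : V) : ℝ :=
  eDefect W h₁ x y (h₂ z) u - eDefect W h₁ x y (h₂ u) z
    + eDefect W h₁ z u (h₂ x) y - eDefect W h₁ z u (h₂ y) x

/-- The terms of `eDefectComp W h₁ h₂` in which `h₁` and `h₂` act on different arguments,
paired so that `HasCurvatureSymmetries.reverse` exchanges the two members of each pair. -/
def crossTerm (h₁ h₂ : V →ₗ[ℝ] V) (x y z u : V) : ℝ :=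
  (W y (h₂ z) (h₁ x) u + W u (h₂ x) (h₁ z) y) - (W x (h₂ z) (h₁ y) u + W u (h₂ y) (h₁ z) x)
    - (W y (h₂ u) (h₁ x) z + W z (h₂ x) (h₁ u) y) + (W x (h₂ u) (h₁ y) z + W z (h₂ y) (h₁ u) x)

variable {W}

theorem memE_iff {h : V →ₗ[ℝ] V} : memE W h ↔ ∀ x y z u, eDefect W h x y z u = 0 := Iff.rfl

theorem memG_iff {h : V →ₗ[ℝ] V} : memG W h ↔ ∀ x y z u, gDefect W h x y z u = 0 := Iff.rfl

theorem HasCurvatureSymmetries.crossTerm_comm (hW : HasCurvatureSymmetries W)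
    (h₁ h₂ : V →ₗ[ℝ] V) (x y z u : V) : crossTerm W h₁ h₂ x y z u = crossTerm W h₂ h₁ x y z u := by
  simp only [crossTerm, hW.reverse _ (h₁ _) (h₂ _)]
  ring

theorem HasCurvatureSymmetries.eDefectComp_eq_gDefect_comp_add_crossTerm (hW : HasCurvatureSymmetries W)
    (h₁ h₂ : V →ₗ[ℝ] V) (x y z u : V) :
    eDefectComp W h₁ h₂ x y z u = gDefect W (h₁ ∘ₗ h₂) x y z u + crossTerm W h₁ h₂ x y z u := by
  simp only [eDefectComp, eDefect, gDefect, crossTerm, LinearMap.comp_apply]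
  linear_combination (-1 : ℝ) * hW.antisym₂ x y (h₁ (h₂ u)) z + hW.pair_symm z u (h₁ (h₂ x)) y
    - hW.pair_symm z u (h₁ (h₂ y)) x - hW.antisym₁ (h₁ (h₂ y)) x z u
    + hW.antisym₁ (h₂ z) x (h₁ y) u - hW.antisym₁ (h₂ u) x (h₁ y) z
    + hW.antisym₁ (h₂ x) z (h₁ u) y - hW.antisym₁ (h₂ y) z (h₁ u) x

theorem gDefect_sub (f g : V →ₗ[ℝ] V) (x y z u : V) :
    gDefect W (f - g) x y z u = gDefect W f x y z u - gDefect W g x y z u := by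
  simp only [gDefect, LinearMap.sub_apply, map_sub, W.map_sub_apply]
  ring

theorem HasCurvatureSymmetries.gDefect_commutator (hW : HasCurvatureSymmetries W)
    (h₁ h₂ : V →ₗ[ℝ] V) (x y z u : V) :
    gDefect W (h₁ ∘ₗ h₂ - h₂ ∘ₗ h₁) x y z u
      = eDefectComp W h₁ h₂ x y z u - eDefectComp W h₂ h₁ x y z u := by
  rw [gDefect_sub, hW.eDefectComp_eq_gDefect_comp_add_crossTerm,
    hW.eDefectComp_eq_gDefect_comp_add_crossTerm, hW.crossTerm_comm h₂]
  ring

theorem eDefectComp_eq_zero {h₁ : V →ₗ[ℝ] V} (hE : memE W h₁) (h₂ : V →ₗ[ℝ] V) (x y z u : V) :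
    eDefectComp W h₁ h₂ x y z u = 0 := by
  simp only [eDefectComp, memE_iff.1 hE]
  ring

end CommutatorOfE

theorem stmt8 (W : Tensor4 V) (hW : IsWeylTensor W)
    (h₁ h₂ : V →ₗ[ℝ] V) (hE₁ : memE W h₁) (hE₂ : memE W h₂) :
    memG W (h₁ ∘ₗ h₂ - h₂ ∘ₗ h₁) := memG_iff.2 fun x y z u => by
  rw [hW.hasCurvatureSymmetries.gDefect_commutator, eDefectComp_eq_zero hE₁,
    eDefectComp_eq_zero hE₂, sub_zero]
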